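/- For 0 < a ≤ 1, let ρ₂(a) be the 6×6 matrix (1/(8a+2)) · [[3a+1,0,0,0,2a,0],[0,a,0,0,0,2a],[0,0,0,0,0,0],[0,0,0,0,0,0],[2a,0,0,0,a,0],[0,2a,0,0,0,3a+1]]. Then ρ₂(a) is a 2⊗3 state and it violates the inequality D ≥ N², i.e., D(ρ₂(a)) < N(ρ₂(a))². -/

import Mathlib

open Matrix BigOperators Polynomial
open scoped Kronecker ComplexOrder

noncomputable section

/-- Squared Hilbert–Schmidt norm `‖C‖² = Tr(CᴴC)`. -/
def hsNormSq {d : Type*} [Fintype d] (C : Matrix d d ℂ) : ℝ :=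
  (Matrix.trace (Cᴴ * C)).re

/-- Trace norm `‖X‖₁ = Tr √(XᴴX)`. -/
def traceNorm {d : Type*} [Fintype d] [DecidableEq d] (X : Matrix d d ℂ) : ℝ :=
  (((Matrix.posSemidef_conjTranspose_mul_self X).1.eigenvectorUnitary.1 *
      Matrix.diagonal ((fun r : ℝ => (r : ℂ)) ∘ (√·) ∘ (Matrix.posSemidef_conjTranspose_mul_self X).1.eigenvalues) *
      (star (Matrix.posSemidef_conjTranspose_mul_self X).1.eigenvectorUnitary :
        Matrix d d ℂ)).trace).re

/-- Partial transpose on the first factor: `ρ^Γ((i,k),(j,l)) = ρ((j,k),(i,l))`. -/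
def ptranspose {m n : ℕ} (ρ : Matrix (Fin m × Fin n) (Fin m × Fin n) ℂ) :
    Matrix (Fin m × Fin n) (Fin m × Fin n) ℂ :=
  Matrix.of fun p q => ρ (q.1, p.2) (p.1, q.2)

/-- Negativity `N(ρ) = (‖ρ^Γ‖₁ - 1)/(m-1)`. -/
def negativity {m n : ℕ} (ρ : Matrix (Fin m × Fin n) (Fin m × Fin n) ℂ) : ℝ :=
  (traceNorm (ptranspose ρ) - 1) / ((m : ℝ) - 1)

/-- `ψ` is an orthonormal basis of `ℂ^m` (an orthonormal family of `m` vectors). -/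
def IsONB {m : ℕ} (ψ : Fin m → (Fin m → ℂ)) : Prop :=
  ∀ k l, (∑ i, star (ψ k i) * ψ l i) = if k = l then 1 else 0

/-- The rank-one projector `|v⟩⟨v|`. -/
def proj {m : ℕ} (v : Fin m → ℂ) : Matrix (Fin m) (Fin m) ℂ :=
  Matrix.vecMulVec v (fun j => star (v j))

/-- The von Neumann measurement map
`Π^A(ρ) = ∑ k, (|ψ_k⟩⟨ψ_k| ⊗ I_n) ρ (|ψ_k⟩⟨ψ_k| ⊗ I_n)`. -/
def piA {m n : ℕ} (ψ : Fin m → (Fin m → ℂ))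
    (ρ : Matrix (Fin m × Fin n) (Fin m × Fin n) ℂ) :
    Matrix (Fin m × Fin n) (Fin m × Fin n) ℂ :=
  ∑ k, (proj (ψ k) ⊗ₖ (1 : Matrix (Fin n) (Fin n) ℂ)) * ρ *
       (proj (ψ k) ⊗ₖ (1 : Matrix (Fin n) (Fin n) ℂ))

/-- Geometric discord
`D(ρ) = (m/(m-1)) · inf over von Neumann measurements of ‖ρ - Π^A(ρ)‖²`. -/
def gd {m n : ℕ} (ρ : Matrix (Fin m × Fin n) (Fin m × Fin n) ℂ) : ℝ :=
  ((m : ℝ) / ((m : ℝ) - 1)) *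
    ⨅ ψ : {ψ : Fin m → (Fin m → ℂ) // IsONB ψ}, hsNormSq (ρ - piA ψ.1 ρ)

/-- An `m ⊗ n` state: positive semidefinite with trace one. -/
def IsState {m n : ℕ} (ρ : Matrix (Fin m × Fin n) (Fin m × Fin n) ℂ) : Prop :=
  ρ.PosSemidef ∧ ρ.trace = 1

/-- Reindex a `6 × 6` matrix by `Fin 2 × Fin 3` with the ordering
`(1,1),(1,2),(1,3),(2,1),(2,2),(2,3)`. -/
def ofM6 (M : Matrix (Fin 6) (Fin 6) ℂ) :
    Matrix (Fin 2 × Fin 3) (Fin 2 × Fin 3) ℂ :=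
  Matrix.of fun p q =>
    M ⟨p.1.val * 3 + p.2.val, by have := p.1.isLt; have := p.2.isLt; omega⟩
      ⟨q.1.val * 3 + q.2.val, by have := q.1.isLt; have := q.2.isLt; omega⟩

/-- The family of states `ρ₁(a,b)`. -/
def rho1 (a b : ℝ) : Matrix (Fin 2 × Fin 3) (Fin 2 × Fin 3) ℂ :=
  ofM6 ((1 / (2 * ((a : ℂ)^2 + (b : ℂ)^2))) •
    !![(a:ℂ)^2, 0, 0, 0, (a:ℂ)*(b:ℂ), 0;
       0, (b:ℂ)^2, 0, 0, 0, (a:ℂ)*(b:ℂ);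
       0, 0, 0, 0, 0, 0;
       0, 0, 0, 0, 0, 0;
       (a:ℂ)*(b:ℂ), 0, 0, 0, (b:ℂ)^2, 0;
       0, (a:ℂ)*(b:ℂ), 0, 0, 0, (a:ℂ)^2])

/-! Write `P` for the projection onto `|0,0⟩, |1,2⟩`. Then `(8a+2) ρ₂(a) = a G + (1 - a) P` with
`G² = 5 G`, so `ρ₂(a) ≥ 0` for `0 ≤ a ≤ 1`, and `(8a+2) ρ₂(a)^Γ = (3a+1) P + a K`,
where `K` acts on the complement of `P` as two copies of `B = [[1,2],[2,0]]`. From `B² = B + 4`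
one gets `|B| = (B + 8)/√17`, hence `‖ρ₂(a)^Γ‖₁ = (6a + 2 + 2√17 a)/(8a+2)` and
`N(ρ₂(a)) = 2a(√17 - 1)/(8a+2)`. Measuring in the computational basis removes only the four
entries `2a/(8a+2)`, so `D(ρ₂(a)) ≤ 32a²/(8a+2)² < N(ρ₂(a))²`, the last step being `√17 < 5`. -/

open scoped MatrixOrder

section HilbertSchmidt

variable {d : Type*} [Fintype d]

theorem hsNormSq_eq_sum_normSq (C : Matrix d d ℂ) :
    hsNormSq C = ∑ p, ∑ q, Complex.normSq (C p q) := by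
  simp only [hsNormSq, Matrix.trace, Matrix.diag, Matrix.mul_apply, Matrix.conjTranspose_apply,
    Complex.re_sum, Complex.star_def, ← Complex.normSq_eq_conj_mul_self, Complex.ofReal_re]
  exact Finset.sum_comm

theorem hsNormSq_nonneg (C : Matrix d d ℂ) : 0 ≤ hsNormSq C := by
  rw [hsNormSq_eq_sum_normSq]
  exact Finset.sum_nonneg fun p _ => Finset.sum_nonneg fun q _ => Complex.normSq_nonneg _

end HilbertSchmidt

theorem Matrix.IsHermitian.posSemidef_of_mul_self_eq_smul {d : Type*} [Fintype d]
    {H : Matrix d d ℂ} (hH : H.IsHermitian) {c : ℝ} (hc : 0 < c) (h : H * H = c • H) :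
    H.PosSemidef := by
  have hH' : H = c⁻¹ • (Hᴴ * H) := by
    rw [hH.eq, h, smul_smul, inv_mul_cancel₀ hc.ne', one_smul]
  rw [hH']
  exact (posSemidef_conjTranspose_mul_self H).smul (inv_nonneg.2 hc.le)

theorem traceNorm_eq_re_trace_of_mul_self_eq {d : Type*} [Fintype d] [DecidableEq d]
    {X S : Matrix d d ℂ} (hS : S.PosSemidef) (h : S * S = Xᴴ * X) :
    traceNorm X = S.trace.re := by
  have hX := posSemidef_conjTranspose_mul_self X
  have hsqrt : hX.1.cfc Real.sqrt = S := by
    rw [← hX.1.cfc_eq, ← CFC.sqrt_unique h hS.nonneg, CFC.sqrt_eq_cfc,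
      cfc_nnreal_eq_real _ _ hX.nonneg]
    exact cfc_congr fun x _ => by rw [Real.sqrt]
  rw [← hsqrt]
  rfl

section Bipartite

variable {m n : ℕ}

theorem ptranspose_add (ρ σ : Matrix (Fin m × Fin n) (Fin m × Fin n) ℂ) :
    ptranspose (ρ + σ) = ptranspose ρ + ptranspose σ :=
  rfl

theorem ptranspose_smul (r : ℝ) (ρ : Matrix (Fin m × Fin n) (Fin m × Fin n) ℂ) :
    ptranspose (r • ρ) = r • ptranspose ρ :=
  rfl

theorem negativity_eq_traceNorm_sub_one (ρ : Matrix (Fin 2 × Fin n) (Fin 2 × Fin n) ℂ) :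
    negativity ρ = traceNorm (ptranspose ρ) - 1 := by
  norm_num [negativity]

theorem isONB_single : IsONB fun k : Fin m => (Pi.single k 1 : Fin m → ℂ) := by
  intro k l
  simp [Pi.single_apply, eq_comm]

theorem proj_single_kronecker_one (k : Fin m) :
    proj (Pi.single k 1) ⊗ₖ (1 : Matrix (Fin n) (Fin n) ℂ) =
      Matrix.diagonal fun p => if p.1 = k then 1 else 0 := by
  ext ⟨i, k'⟩ ⟨j, l⟩
  simp only [proj, Matrix.kroneckerMap_apply, Matrix.vecMulVec_apply, Pi.single_apply,
    Matrix.one_apply, Matrix.diagonal_apply, Prod.mk.injEq]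
  split_ifs <;> simp_all

theorem piA_single_apply (ρ : Matrix (Fin m × Fin n) (Fin m × Fin n) ℂ) (p q : Fin m × Fin n) :
    piA (fun k => Pi.single k 1) ρ p q = if p.1 = q.1 then ρ p q else 0 := by
  simp [piA, proj_single_kronecker_one, Matrix.sum_apply, Matrix.diagonal_mul, Matrix.mul_diagonal]

theorem hsNormSq_sub_piA_single (ρ : Matrix (Fin m × Fin n) (Fin m × Fin n) ℂ) :
    hsNormSq (ρ - piA (fun k => Pi.single k 1) ρ) =
      ∑ p, ∑ q, if p.1 = q.1 then 0 else Complex.normSq (ρ p q) := by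
  simp only [hsNormSq_eq_sum_normSq, Matrix.sub_apply, piA_single_apply]
  refine Finset.sum_congr rfl fun p _ => Finset.sum_congr rfl fun q _ => ?_
  split_ifs <;> simp

theorem gd_le_of_isONB {ψ : Fin m → Fin m → ℂ} (hψ : IsONB ψ)
    (ρ : Matrix (Fin m × Fin n) (Fin m × Fin n) ℂ) :
    gd ρ ≤ (m / (m - 1) : ℝ) * hsNormSq (ρ - piA ψ ρ) := by
  have hm : (0 : ℝ) ≤ m / (m - 1) := by
    rcases m with _ | m
    · simp
    · push_cast
      exact div_nonneg (by positivity) (by simp)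
  refine mul_le_mul_of_nonneg_left (ciInf_le ⟨0, ?_⟩ (⟨ψ, hψ⟩ : {ψ // IsONB ψ})) hm
  rintro _ ⟨φ, rfl⟩
  exact hsNormSq_nonneg _

end Bipartite

theorem mul_self_smul_add_smul_eq {A : Type*} [Ring A] [Algebra ℝ A] {P K : A} (hP : P * P = P)
    (hPK : P * K = 0) (hKP : K * P = 0) (hK : K * K = K + 4 • (1 - P)) {s t r : ℝ}
    (hr : 17 * r ^ 2 = t ^ 2) :
    (s • P + r • (K + 8 • (1 - P))) * (s • P + r • (K + 8 • (1 - P))) =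
      (s • P + t • K) * (s • P + t • K) := by
  simp only [mul_add, add_mul, mul_sub, sub_mul, smul_mul_assoc, mul_smul_comm, mul_one, one_mul,
    hP, hPK, hKP, hK, smul_zero, zero_add, add_zero, smul_add, smul_sub, sub_self, sub_zero]
  match_scalars <;> linarith

theorem Matrix.trace_submatrix_equiv {ι κ R : Type*} [Fintype ι] [Fintype κ] [AddCommMonoid R]
    (M : Matrix κ κ R) (e : ι ≃ κ) : (M.submatrix e e).trace = M.trace :=
  e.sum_comp fun i => M i i

def pairIndex : Fin 2 × Fin 3 ≃ Fin 6 := finProdFinEquiv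

/-- Concrete matrices are given with integer entries so that identities between them are checked
by `decide`; `intOp` reads them as operators on `ℂ² ⊗ ℂ³` in the ordering of `ofM6`. -/
def intOp : Matrix (Fin 6) (Fin 6) ℤ →+* Matrix (Fin 2 × Fin 3) (Fin 2 × Fin 3) ℂ :=
  (Matrix.reindexAlgEquiv ℂ ℂ pairIndex.symm).toRingHom.comp (Int.castRingHom ℂ).mapMatrix

section IntOp

variable (M : Matrix (Fin 6) (Fin 6) ℤ)

theorem intOp_apply (p q : Fin 2 × Fin 3) : intOp M p q = M (pairIndex p) (pairIndex q) :=
  rfl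

theorem ofM6_eq_submatrix (N : Matrix (Fin 6) (Fin 6) ℂ) :
    ofM6 N = N.submatrix pairIndex pairIndex := by
  ext p q
  simp only [ofM6, Matrix.of_apply, Matrix.submatrix_apply]
  congr 1 <;> ext <;> simp [pairIndex, finProdFinEquiv] <;> ring

theorem intOp_eq_ofM6 : intOp M = ofM6 (M.map ((↑) : ℤ → ℂ)) := by
  rw [ofM6_eq_submatrix]
  rfl

theorem conjTranspose_intOp : (intOp M)ᴴ = intOp Mᵀ := by
  ext p q
  simp [intOp_apply]

theorem trace_intOp : (intOp M).trace = (M.trace : ℂ) := by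
  change ((M.map ((↑) : ℤ → ℂ)).submatrix pairIndex pairIndex).trace = _
  rw [Matrix.trace_submatrix_equiv]
  simp [Matrix.trace]

theorem isHermitian_intOp (hM : Mᵀ = M) : (intOp M).IsHermitian := by
  rw [Matrix.IsHermitian, conjTranspose_intOp, hM]

theorem posSemidef_intOp (hM : Mᵀ = M) {c : ℕ} (hc : 0 < c) (h : M * M = c • M) :
    (intOp M).PosSemidef := by
  refine (isHermitian_intOp M hM).posSemidef_of_mul_self_eq_smul (c := c) (by positivity) ?_
  rw [← map_mul, h, map_nsmul, Nat.cast_smul_eq_nsmul]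

theorem ptranspose_intOp {N : Matrix (Fin 6) (Fin 6) ℤ}
    (h : ∀ p q : Fin 2 × Fin 3,
      M (pairIndex (q.1, p.2)) (pairIndex (p.1, q.2)) = N (pairIndex p) (pairIndex q)) :
    ptranspose (intOp M) = intOp N := by
  ext p q
  simp only [ptranspose, Matrix.of_apply, intOp_apply, h]

end IntOp

namespace Rho2

def P : Matrix (Fin 6) (Fin 6) ℤ := Matrix.diagonal ![1, 0, 0, 0, 0, 1]

def G : Matrix (Fin 6) (Fin 6) ℤ :=
  !![4, 0, 0, 0, 2, 0;
     0, 1, 0, 0, 0, 2;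
     0, 0, 0, 0, 0, 0;
     0, 0, 0, 0, 0, 0;
     2, 0, 0, 0, 1, 0;
     0, 2, 0, 0, 0, 4]

def K : Matrix (Fin 6) (Fin 6) ℤ :=
  !![0, 0, 0, 0, 0, 0;
     0, 1, 0, 2, 0, 0;
     0, 0, 0, 0, 2, 0;
     0, 2, 0, 0, 0, 0;
     0, 0, 2, 0, 1, 0;
     0, 0, 0, 0, 0, 0]

def rho (a : ℝ) : Matrix (Fin 2 × Fin 3) (Fin 2 × Fin 3) ℂ :=
  (8 * a + 2)⁻¹ • (a • intOp G + (1 - a) • intOp P)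

theorem ofM6_eq_rho (a : ℝ) :
    ofM6 ((1 / (8 * (a : ℂ) + 2)) •
      !![3*(a:ℂ)+1, 0, 0, 0, 2*(a:ℂ), 0;
         0, (a:ℂ), 0, 0, 0, 2*(a:ℂ);
         0, 0, 0, 0, 0, 0;
         0, 0, 0, 0, 0, 0;
         2*(a:ℂ), 0, 0, 0, (a:ℂ), 0;
         0, 2*(a:ℂ), 0, 0, 0, 3*(a:ℂ)+1]) = rho a := by
  rw [rho, intOp_eq_ofM6, intOp_eq_ofM6, ofM6_eq_submatrix, ofM6_eq_submatrix,
    ofM6_eq_submatrix]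
  ext p q
  simp only [Matrix.submatrix_apply, Matrix.smul_apply, Matrix.add_apply]
  generalize pairIndex p = i
  generalize pairIndex q = j
  fin_cases i <;> fin_cases j <;> simp [G, P, -mul_eq_mul_left_iff] <;> ring

theorem isState_rho {a : ℝ} (ha0 : 0 < a) (ha1 : a ≤ 1) : IsState (rho a) := by
  have hP := posSemidef_intOp P (by decide) one_pos (by decide)
  have hG := posSemidef_intOp G (by decide) (c := 5) (by norm_num) (by decide)
  refine ⟨((hG.smul ha0.le).add (hP.smul (sub_nonneg.2 ha1))).smul (by positivity), ?_⟩
  simp only [rho, Matrix.trace_smul, Matrix.trace_add, trace_intOp,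
    (by decide : G.trace = 10), (by decide : P.trace = 2)]
  rw [Complex.real_smul, Complex.real_smul, Complex.real_smul]
  have : (8 * a + 2 : ℂ) ≠ 0 := by exact_mod_cast (by positivity : (8 * a + 2 : ℝ) ≠ 0)
  push_cast
  field_simp
  ring

theorem ptranspose_rho (a : ℝ) :
    ptranspose (rho a) = ((3 * a + 1) / (8 * a + 2)) • intOp P + (a / (8 * a + 2)) • intOp K := by
  have hG : ptranspose (intOp G) = intOp (4 • P + K) := ptranspose_intOp G (by decide)
  have hP : ptranspose (intOp P) = intOp P := ptranspose_intOp P (by decide)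
  rw [rho, ptranspose_smul, ptranspose_add, ptranspose_smul, ptranspose_smul, hG, hP, map_add,
    map_nsmul]
  match_scalars <;> ring

theorem isHermitian_ptranspose_rho (a : ℝ) : (ptranspose (rho a)).IsHermitian := by
  simp only [Matrix.IsHermitian, ptranspose_rho, Matrix.conjTranspose_add,
    Matrix.conjTranspose_smul, star_trivial, conjTranspose_intOp, (by decide : Pᵀ = P),
    (by decide : Kᵀ = K)]

theorem intOp_P_mul_self : intOp P * intOp P = intOp P := by
  rw [← map_mul, (by decide : P * P = P)]

theorem intOp_P_mul_K : intOp P * intOp K = 0 := by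
  rw [← map_mul, (by decide : P * K = 0), map_zero]

theorem intOp_K_mul_P : intOp K * intOp P = 0 := by
  rw [← map_mul, (by decide : K * P = 0), map_zero]

theorem intOp_K_mul_self : intOp K * intOp K = intOp K + 4 • (1 - intOp P) := by
  rw [← map_mul, (by decide : K * K = K + 4 • (1 - P)), map_add, map_nsmul, map_sub, map_one]

def absPtransposeRho (a : ℝ) : Matrix (Fin 2 × Fin 3) (Fin 2 × Fin 3) ℂ :=
  ((3 * a + 1) / (8 * a + 2)) • intOp P + (a / (√17 * (8 * a + 2))) • intOp (K + 8 • (1 - P))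

theorem posSemidef_absPtransposeRho {a : ℝ} (ha : 0 ≤ a) : (absPtransposeRho a).PosSemidef := by
  have hP : (intOp P).PosSemidef := posSemidef_intOp P (by decide) one_pos (by decide)
  have hKP : (intOp (K + 8 • (1 - P))).PosSemidef := by
    rw [(by decide : K + 8 • (1 - P) = Kᵀ * K + 4 • (1 - P)), map_add, map_mul, map_nsmul,
      ← conjTranspose_intOp]
    exact (posSemidef_conjTranspose_mul_self _).add
      (nsmul_nonneg (posSemidef_intOp (1 - P) (by decide) one_pos (by decide)).nonneg 4).posSemidef
  exact (hP.smul (by positivity)).add (hKP.smul (by positivity))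

theorem absPtransposeRho_mul_self {a : ℝ} (ha : 0 < a) :
    absPtransposeRho a * absPtransposeRho a =
      (ptranspose (rho a))ᴴ * ptranspose (rho a) := by
  rw [(isHermitian_ptranspose_rho a).eq, ptranspose_rho, absPtransposeRho, map_add, map_nsmul,
    map_sub, map_one]
  refine mul_self_smul_add_smul_eq intOp_P_mul_self intOp_P_mul_K intOp_K_mul_P
    intOp_K_mul_self ?_
  have : (0 : ℝ) < 8 * a + 2 := by positivity
  field_simp
  rw [Real.sq_sqrt (by norm_num)]

theorem traceNorm_ptranspose_rho {a : ℝ} (ha : 0 < a) :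
    traceNorm (ptranspose (rho a)) = (6 * a + 2 + 2 * √17 * a) / (8 * a + 2) := by
  rw [traceNorm_eq_re_trace_of_mul_self_eq (posSemidef_absPtransposeRho ha.le)
    (absPtransposeRho_mul_self ha)]
  simp only [absPtransposeRho, Matrix.trace_add, Matrix.trace_smul, trace_intOp,
    (by decide : P.trace = 2), (by decide : (K + 8 • (1 - P)).trace = (34 : ℤ)),
    Complex.real_smul, Complex.add_re, Complex.re_ofReal_mul]
  have : (0 : ℝ) < 8 * a + 2 := by positivity
  have h17 : √17 ^ 2 = 17 := Real.sq_sqrt (by norm_num)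
  norm_num
  field_simp
  linear_combination (-2 * a) * h17

theorem negativity_rho {a : ℝ} (ha : 0 < a) :
    negativity (rho a) = 2 * a * (√17 - 1) / (8 * a + 2) := by
  have : (0 : ℝ) < 8 * a + 2 := by positivity
  rw [negativity_eq_traceNorm_sub_one, traceNorm_ptranspose_rho ha]
  field_simp
  ring

theorem hsNormSq_sub_piA_single_rho (a : ℝ) :
    hsNormSq (rho a - piA (fun k => Pi.single k 1) (rho a)) = 16 * (a / (8 * a + 2)) ^ 2 := by
  have hP : ∀ p q : Fin 2 × Fin 3, p.1 ≠ q.1 → P (pairIndex p) (pairIndex q) = 0 := by decide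
  have hG : (∑ p : Fin 2 × Fin 3, ∑ q : Fin 2 × Fin 3,
      if p.1 = q.1 then 0 else G (pairIndex p) (pairIndex q) ^ 2) = 16 := by decide
  rw [hsNormSq_sub_piA_single]
  calc _ = ∑ p : Fin 2 × Fin 3, ∑ q : Fin 2 × Fin 3, (a / (8 * a + 2)) ^ 2 *
        ((if p.1 = q.1 then 0 else G (pairIndex p) (pairIndex q) ^ 2 : ℤ) : ℝ) := by
        refine Finset.sum_congr rfl fun p _ => Finset.sum_congr rfl fun q _ => ?_
        split_ifs with h
        · simp
        · simp only [rho, Matrix.smul_apply, Matrix.add_apply, intOp_apply, hP p q h]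
          simp only [Int.cast_zero, smul_zero, add_zero, Complex.real_smul, Complex.normSq_mul,
            Complex.normSq_ofReal, Complex.normSq_intCast, Int.cast_pow]
          ring
    _ = 16 * (a / (8 * a + 2)) ^ 2 := by
        have hG' : (∑ p : Fin 2 × Fin 3, ∑ q : Fin 2 × Fin 3,
            ((if p.1 = q.1 then 0 else G (pairIndex p) (pairIndex q) ^ 2 : ℤ) : ℝ)) = 16 := by
          exact_mod_cast hG
        simp only [← Finset.mul_sum, hG']
        ring

theorem gd_rho_le (a : ℝ) : gd (rho a) ≤ 32 * (a / (8 * a + 2)) ^ 2 := by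
  have h := gd_le_of_isONB isONB_single (rho a)
  rw [hsNormSq_sub_piA_single_rho] at h
  norm_num at h
  linarith

end Rho2

theorem stmt14 (a : ℝ) (ha0 : 0 < a) (ha1 : a ≤ 1)
    (ρ : Matrix (Fin 2 × Fin 3) (Fin 2 × Fin 3) ℂ)
    (hρ : ρ = ofM6 ((1 / (8 * (a : ℂ) + 2)) •
      !![3*(a:ℂ)+1, 0, 0, 0, 2*(a:ℂ), 0;
         0, (a:ℂ), 0, 0, 0, 2*(a:ℂ);
         0, 0, 0, 0, 0, 0;
         0, 0, 0, 0, 0, 0;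
         2*(a:ℂ), 0, 0, 0, (a:ℂ), 0;
         0, 2*(a:ℂ), 0, 0, 0, 3*(a:ℂ)+1])) :
    IsState ρ ∧ gd ρ < negativity ρ ^ 2 := by
  rw [hρ, Rho2.ofM6_eq_rho]
  refine ⟨Rho2.isState_rho ha0 ha1, (Rho2.gd_rho_le a).trans_lt ?_⟩
  have h17 : √17 ^ 2 = 17 := Real.sq_sqrt (by norm_num)
  have h5 : √17 < 5 := by rw [Real.sqrt_lt' (by norm_num)]; norm_num
  have key : 32 * a ^ 2 < (2 * a * (√17 - 1)) ^ 2 := by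
    nlinarith [mul_pos (pow_pos ha0 2) (sub_pos.2 h5)]
  rw [Rho2.negativity_rho ha0, div_pow, div_pow, ← mul_div_assoc]
  exact div_lt_div_of_pos_right key (by positivity)

end
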